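/- Let M > 0 and let α, E be real numbers. Suppose g̃ : (−∞, 1) → ℝ is twice differentiable, and define g(s) = s^{α} g̃(1 − s/(2M)) for s ∈ (2M, ∞). Then g satisfies d/ds ( s(s − 2M) g′(s) ) = ( (E² − 1)/4 − 2Mα²/s ) g(s) for all s ∈ (2M, ∞) if and only if g̃ satisfies z(1 − z) g̃″(z) + ( 1 − (2α + 2) z ) g̃′(z) − (1/4)( (2α + 1)² − E² ) g̃(z) = 0 for all z < 0. -/

import Mathlib

/-!
Write `g = s^α φ` with `φ(s) = g̃(1 - s/(2M))`. For any weight `A`, conjugating the operator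
`(A g')'` by `s^α` gives `s^α (A φ'' + (A' + 2αA/s) φ' + α(A'/s + (α-1)A/s²) φ)`, and the affine
substitution `z = 1 - s/(2M)` turns `d/ds` into `-(2M)⁻¹ d/dz`. With `A = s(s - 2M) = -4M² z(1-z)`
the terms in `1/s` cancel against the potential, and one finds
`(A g')' - V g = -s^α · (hypergeometric operator applied to g̃)(z)`. Since `s^α > 0`, the two
equations are equivalent.
-/

open Set Filter Topology

lemma hasDerivAt_rpow_mul {φ : ℝ → ℝ} {φ' s : ℝ} (α : ℝ) (hs : 0 < s) (hφ : HasDerivAt φ φ' s) :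
    HasDerivAt (fun t => t ^ α * φ t) (s ^ α * (φ' + α * φ s / s)) s := by
  refine ((Real.hasDerivAt_rpow_const (p := α) (Or.inl hs.ne')).mul hφ).congr_deriv ?_
  rw [Real.rpow_sub_one hs.ne']
  field_simp
  ring

lemma hasDerivAt_mul_deriv_rpow_mul {A φ g : ℝ → ℝ} {A' φ'' α s : ℝ} (hs : 0 < s)
    (hg : g =ᶠ[𝓝 s] fun t => t ^ α * φ t) (hA : HasDerivAt A A' s)
    (hφ : ∀ᶠ t in 𝓝 s, HasDerivAt φ (deriv φ t) t) (hφ' : HasDerivAt (deriv φ) φ'' s) :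
    HasDerivAt (fun t => A t * deriv g t)
      (s ^ α * (A s * φ'' + (A' + 2 * α * A s / s) * deriv φ s
        + α * (A' / s + (α - 1) * A s / s ^ 2) * φ s)) s := by
  have hderiv : (fun t => A t * deriv g t) =ᶠ[𝓝 s]
      fun t => A t * (t ^ α * (deriv φ t + α * φ t / t)) := by
    filter_upwards [hg.eventuallyEq_nhds, hφ, Ioi_mem_nhds hs] with t hgt hφt ht
    rw [hgt.deriv_eq, (hasDerivAt_rpow_mul α ht hφt).deriv]
  have hψ := hφ'.add ((hφ.self_of_nhds.const_mul α).div (hasDerivAt_id s) hs.ne')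
  refine ((hA.mul (hasDerivAt_rpow_mul α hs hψ)).congr_of_eventuallyEq hderiv).congr_deriv ?_
  simp only [Pi.add_apply, Pi.div_apply, id]
  field_simp
  ring

lemma hasDerivAt_comp_one_sub_div {f : ℝ → ℝ} {f' c s : ℝ} (hf : HasDerivAt f f' (1 - s / c)) :
    HasDerivAt (fun t => f (1 - t / c)) (-f' / c) s := by
  refine (hf.comp s (((hasDerivAt_id s).div_const c).const_sub 1)).congr_deriv ?_
  ring

lemma hardy_operator_eq_neg_rpow_mul_hypergeometric {M α E : ℝ} (hM : 0 < M) {gt g : ℝ → ℝ}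
    (hgt : ∀ z < (1:ℝ), DifferentiableAt ℝ gt z)
    (hgt' : ∀ z < (1:ℝ), DifferentiableAt ℝ (deriv gt) z)
    (hg : ∀ s ∈ Ioi (2*M), g s = s ^ α * gt (1 - s/(2*M))) {s : ℝ} (hs : 2 * M < s) :
    deriv (fun t => t*(t - 2*M) * deriv g t) s - ((E^2 - 1)/4 - 2*M*α^2/s) * g s
      = -(s ^ α) * (let z := 1 - s/(2*M)
          z*(1 - z) * deriv (deriv gt) z + (1 - (2*α + 2)*z) * deriv gt z
            - (1/4)*((2*α + 1)^2 - E^2) * gt z) := by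
  have h2M : 0 < 2 * M := by linarith
  have hz : ∀ t, 0 < t → 1 - t / (2*M) < 1 := fun t ht => by
    have := div_pos ht h2M
    linarith
  have hφ : ∀ t, 0 < t →
      HasDerivAt (fun t => gt (1 - t/(2*M))) (-deriv gt (1 - t/(2*M)) / (2*M)) t :=
    fun t ht => hasDerivAt_comp_one_sub_div (hgt _ (hz t ht)).hasDerivAt
  have hs0 : 0 < s := h2M.trans hs
  have hφ' : HasDerivAt (deriv fun t => gt (1 - t/(2*M)))
      (deriv (deriv gt) (1 - s/(2*M)) / (2*M) ^ 2) s := by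
    have hderiv : (deriv fun t => gt (1 - t/(2*M))) =ᶠ[𝓝 s]
        fun t => -deriv gt (1 - t/(2*M)) / (2*M) := by
      filter_upwards [Ioi_mem_nhds hs0] with t ht
      exact (hφ t ht).deriv
    refine (((hasDerivAt_comp_one_sub_div (hgt' _ (hz s hs0)).hasDerivAt).fun_neg.div_const
      (2*M)).congr_of_eventuallyEq hderiv).congr_deriv ?_
    ring
  have hA : HasDerivAt (fun t => t * (t - 2*M)) (1 * (s - 2*M) + s * 1) s :=
    (hasDerivAt_id s).mul ((hasDerivAt_id s).sub_const (2*M))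
  have key := hasDerivAt_mul_deriv_rpow_mul hs0 (eventuallyEq_of_mem (Ioi_mem_nhds hs) hg) hA
    (eventually_of_mem (Ioi_mem_nhds hs0) fun t ht => (hφ t ht).deriv ▸ hφ t ht) hφ'
  rw [key.deriv, hg s hs, (hφ s hs0).deriv]
  field_simp
  ring

theorem hardy_ode_iff_hypergeometric
    (M α E : ℝ) (hM : 0 < M)
    (gt : ℝ → ℝ)
    (hgt : ∀ z < (1:ℝ), DifferentiableAt ℝ gt z)
    (hgt' : ∀ z < (1:ℝ), DifferentiableAt ℝ (deriv gt) z)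
    (g : ℝ → ℝ)
    (hg : ∀ s ∈ Ioi (2*M), g s = s ^ α * gt (1 - s/(2*M))) :
    (∀ s ∈ Ioi (2*M),
        deriv (fun t => t*(t - 2*M) * deriv g t) s
          = ((E^2 - 1)/4 - 2*M*α^2/s) * g s)
      ↔ (∀ z < (0:ℝ),
        z*(1 - z) * deriv (deriv gt) z + (1 - (2*α + 2)*z) * deriv gt z
          - (1/4)*((2*α + 1)^2 - E^2) * gt z = 0) := by
  have key := fun s (hs : s ∈ Ioi (2*M)) =>
    hardy_operator_eq_neg_rpow_mul_hypergeometric (E := E) hM hgt hgt' hg hs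
  constructor
  · intro H z hz
    have hs : 2 * M * (1 - z) ∈ Ioi (2*M) := by
      simp only [mem_Ioi]
      nlinarith
    have hzs : 1 - 2 * M * (1 - z) / (2*M) = z := by
      field_simp
      ring
    have hpos : 0 < (2 * M * (1 - z)) ^ α := Real.rpow_pos_of_pos (by linarith [mem_Ioi.1 hs]) α
    have hk := key _ hs
    rw [H _ hs, sub_self, hzs, eq_comm] at hk
    exact (mul_eq_zero.1 hk).resolve_left (neg_ne_zero.2 hpos.ne')
  · intro H s hs
    have hz : 1 - s / (2*M) < 0 := by
      rw [sub_neg, one_lt_div (by linarith)]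
      exact hs
    have hk := key s hs
    rwa [H _ hz, mul_zero, sub_eq_zero] at hk
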